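/- The partial sine sums ∑_{n=1}^N sin(2πnt)/n are uniformly bounded: there exists a constant K such that |∑_{n=1}^N sin(2πnt)/n| ≤ K for all N ∈ ℕ and all t ∈ ℝ. -/

import Mathlib

/-! Reduce `x = 2πt` modulo `2π` to `|x| ≤ π` and put `s = |sin (x / 2)|`, so that `|x| ≤ π s` by
Jordan's inequality. Split the sum `∑ sin (n x) / n` at `M = ⌊1 / s⌋`: each of the first `M` terms
is at most `|x|`, so the head is at most `M π s ≤ π`. The partial sums of `sin (n x)` are bounded by
`1 / s` (Dirichlet kernel), so Abel summation against the decreasing weights `1 / n` bounds the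
tail by `2 / (s (M + 1)) ≤ 2`. -/

open Real Finset

theorem abs_sum_Ico_mul_le_of_antitoneOn {a b : ℕ → ℝ} {B : ℝ} {m : ℕ}
    (ha : ∀ k, |∑ i ∈ range k, a i| ≤ B) (hb : AntitoneOn b (Set.Ici m))
    (hb₀ : ∀ i, m ≤ i → 0 ≤ b i) (n : ℕ) :
    |∑ i ∈ Ico m n, b i * a i| ≤ 2 * B * b m := by
  have hB : 0 ≤ B := (abs_nonneg _).trans (ha 0)
  rcases le_or_gt n m with hnm | hmn
  · rw [Ico_eq_empty_of_le hnm, sum_empty, abs_zero]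
    exact mul_nonneg (mul_nonneg zero_le_two hB) (hb₀ m le_rfl)
  set A : ℕ → ℝ := fun k ↦ ∑ i ∈ range k, a i
  have hmn' : m ≤ n - 1 := by omega
  have hdiff : ∀ i ∈ Ico m (n - 1), |(b (i + 1) - b i) * A (i + 1)| ≤ (b i - b (i + 1)) * B := by
    intro i hi
    have hi : m ≤ i := (mem_Ico.mp hi).1
    have hle : b (i + 1) ≤ b i := hb (Set.mem_Ici.mpr hi) (Set.mem_Ici.mpr (by omega)) (by omega)
    rw [abs_mul, abs_sub_comm, abs_of_nonneg (sub_nonneg.mpr hle)]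
    exact mul_le_mul_of_nonneg_left (ha _) (sub_nonneg.mpr hle)
  have htelescope : ∑ i ∈ Ico m (n - 1), (b i - b (i + 1)) = b m - b (n - 1) := by
    rw [← neg_sub, ← sum_Ico_sub (fun i ↦ b i) hmn', ← sum_neg_distrib]
    simp only [neg_sub]
  have hterm : ∀ i j, m ≤ i → |b i * A j| ≤ b i * B := fun i j hi ↦ by
    rw [abs_mul, abs_of_nonneg (hb₀ i hi)]
    exact mul_le_mul_of_nonneg_left (ha j) (hb₀ i hi)
  have hsum : |∑ i ∈ Ico m (n - 1), (b (i + 1) - b i) * A (i + 1)| ≤ (b m - b (n - 1)) * B := by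
    calc _ ≤ ∑ i ∈ Ico m (n - 1), |(b (i + 1) - b i) * A (i + 1)| := abs_sum_le_sum_abs _ _
      _ ≤ ∑ i ∈ Ico m (n - 1), (b i - b (i + 1)) * B := sum_le_sum hdiff
      _ = (b m - b (n - 1)) * B := by rw [← sum_mul, htelescope]
  have hparts := sum_Ico_by_parts b a hmn
  simp only [smul_eq_mul] at hparts
  rw [hparts]
  calc _ ≤ |b (n - 1) * A n| + |b m * A m|
        + |∑ i ∈ Ico m (n - 1), (b (i + 1) - b i) * A (i + 1)| :=
        (abs_sub _ _).trans (by gcongr; exact abs_sub _ _)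
    _ ≤ 2 * B * b m := by linarith [hterm (n - 1) n hmn', hterm m m le_rfl]

theorem abs_sum_range_sin_nat_mul_le (x : ℝ) (k : ℕ) :
    |∑ n ∈ range k, sin (n * x)| ≤ |sin (x / 2)|⁻¹ := by
  by_cases h : sin (x / 2) = 0
  · -- the bound is then `0⁻¹ = 0`, and indeed every term vanishes
    obtain ⟨j, hj⟩ := sin_eq_zero_iff.mp h
    have hzero : ∀ n : ℕ, sin (n * x) = 0 := fun n ↦ by
      rw [show (n : ℝ) * x = ((2 * n * j : ℤ) : ℝ) * π by push_cast; rw [mul_assoc, hj]; ring]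
      exact sin_int_mul_pi _
    simp [hzero]
  set f : ℕ → ℝ := fun n ↦ cos (n * x - x / 2)
  have hterm : ∀ n : ℕ, 2 * sin (n * x) * sin (x / 2) = f n - f (n + 1) := fun n ↦ by
    rw [two_mul_sin_mul_sin]
    simp only [f]
    push_cast
    ring_nf
  have hprod : |∑ n ∈ range k, sin (n * x)| * (2 * |sin (x / 2)|) ≤ 2 := by
    calc _ = |∑ n ∈ range k, 2 * sin (n * x) * sin (x / 2)| := by
          rw [← sum_mul, ← mul_sum, abs_mul, abs_mul, abs_two]; ring
      _ = |f 0 - f k| := by simp only [hterm, sum_range_sub']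
      _ ≤ |f 0| + |f k| := abs_sub _ _
      _ ≤ 1 + 1 := add_le_add (abs_cos_le_one _) (abs_cos_le_one _)
      _ = 2 := one_add_one_eq_two
  rw [← one_div, le_div_iff₀ (abs_pos.mpr h)]
  linarith

theorem abs_sum_sin_nat_mul_div_le (s : Finset ℕ) (x : ℝ) :
    |∑ n ∈ s, sin (n * x) / n| ≤ #s * |x| := by
  have hterm : ∀ n : ℕ, |sin (n * x) / n| ≤ |x| := fun n ↦ by
    rcases Nat.eq_zero_or_pos n with rfl | hn
    · simp
    have hn : (0 : ℝ) < n := Nat.cast_pos.mpr hn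
    rw [abs_div, abs_of_pos hn, div_le_iff₀ hn]
    calc |sin (n * x)| ≤ |n * x| := abs_sin_le_abs
      _ = |x| * n := by rw [abs_mul, abs_of_pos hn, mul_comm]
  calc _ ≤ ∑ n ∈ s, |sin (n * x) / n| := abs_sum_le_sum_abs _ _
    _ ≤ ∑ _n ∈ s, |x| := sum_le_sum fun n _ ↦ hterm n
    _ = #s * |x| := by rw [sum_const, nsmul_eq_mul]

theorem abs_le_pi_mul_abs_sin_half {x : ℝ} (hx : |x| ≤ π) : |x| ≤ π * |sin (x / 2)| := by
  have h := mul_abs_le_abs_sin (x := x / 2) (by rw [abs_div, abs_two]; linarith)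
  rw [abs_div, abs_two] at h
  calc |x| = π * (2 / π * (|x| / 2)) := by field_simp
    _ ≤ π * |sin (x / 2)| := by gcongr

theorem abs_sum_Icc_sin_nat_mul_div_le_of_abs_le_pi {x : ℝ} (hx : |x| ≤ π) (N : ℕ) :
    |∑ n ∈ Icc 1 N, sin (n * x) / n| ≤ π + 2 := by
  set s := |sin (x / 2)|
  have hjordan : |x| ≤ π * s := abs_le_pi_mul_abs_sin_half hx
  set M := ⌊s⁻¹⌋₊
  have htail_eq : (Icc 1 N).filter (fun n ↦ ¬ n ≤ M) = Ico (M + 1) (N + 1) := by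
    ext n; simp only [mem_filter, mem_Icc, mem_Ico]; omega
  have hhead : |∑ n ∈ (Icc 1 N).filter (· ≤ M), sin (n * x) / n| ≤ π := by
    have hcard : #((Icc 1 N).filter (· ≤ M)) ≤ M := by
      calc _ ≤ #(Icc 1 M) := card_le_card fun n ↦ by simp only [mem_filter, mem_Icc]; omega
        _ = M := by simp
    have hMs : M * s ≤ 1 :=
      calc M * s ≤ s⁻¹ * s := by gcongr; exact Nat.floor_le (by positivity)
        _ ≤ 1 := inv_mul_le_one
    calc _ ≤ #((Icc 1 N).filter (· ≤ M)) * |x| := abs_sum_sin_nat_mul_div_le _ x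
      _ ≤ M * (π * s) := by gcongr
      _ = π * (M * s) := by ring
      _ ≤ π := mul_le_of_le_one_right pi_pos.le hMs
  have htail : |∑ n ∈ Ico (M + 1) (N + 1), sin (n * x) / n| ≤ 2 := by
    have hanti : AntitoneOn (fun n : ℕ ↦ (n : ℝ)⁻¹) (Set.Ici (M + 1)) := fun i hi j _ hij ↦
      inv_anti₀ (Nat.cast_pos.mpr ((M.succ_pos).trans_le hi)) (Nat.cast_le.mpr hij)
    have h := abs_sum_Ico_mul_le_of_antitoneOn (abs_sum_range_sin_nat_mul_le x) hanti
      (fun i _ ↦ inv_nonneg.mpr i.cast_nonneg) (N + 1)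
    simp only [← div_eq_inv_mul] at h
    have hM : s⁻¹ * ((M + 1 : ℕ) : ℝ)⁻¹ ≤ 1 :=
      mul_inv_le_one_of_le₀ (by push_cast; exact (Nat.lt_floor_add_one _).le) (by positivity)
    linarith
  rw [← sum_filter_add_sum_filter_not _ (· ≤ M), htail_eq]
  calc _ ≤ _ := abs_add_le _ _
    _ ≤ π + 2 := add_le_add hhead htail

theorem abs_sum_Icc_sin_nat_mul_div_le (x : ℝ) (N : ℕ) :
    |∑ n ∈ Icc 1 N, sin (n * x) / n| ≤ π + 2 := by
  set j := round (x / (2 * π))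
  have hperiodic : ∀ n : ℕ, sin (n * x) = sin (n * (x - j * (2 * π))) := fun n ↦ by
    rw [show (n : ℝ) * (x - j * (2 * π)) = n * x - ((n * j : ℤ) : ℝ) * (2 * π) by push_cast; ring,
      sin_sub_int_mul_two_pi]
  have hred : |x - j * (2 * π)| ≤ π := by
    calc |x - j * (2 * π)| = |x / (2 * π) - j| * (2 * π) := by
          rw [show x - j * (2 * π) = (x / (2 * π) - j) * (2 * π) by field_simp, abs_mul,
            abs_of_pos two_pi_pos]
      _ ≤ 1 / 2 * (2 * π) := by gcongr; exact abs_sub_round _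
      _ = π := by ring
  simp only [hperiodic]
  exact abs_sum_Icc_sin_nat_mul_div_le_of_abs_le_pi hred N

theorem stmt17 : ∃ K : ℝ, ∀ (N : ℕ) (t : ℝ),
    |∑ n ∈ Finset.Icc 1 N, Real.sin (2 * π * n * t) / n| ≤ K := by
  refine ⟨π + 2, fun N t ↦ ?_⟩
  have hrw : ∀ n : ℕ, 2 * π * n * t = n * (2 * π * t) := fun n ↦ by ring
  simp only [hrw]
  exact abs_sum_Icc_sin_nat_mul_div_le (2 * π * t) N
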